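/- Let ℤ₃ denote the ring of 3-adic integers, grade ℤ₃[x, y] with deg x = 8 and deg y = 12, set Δ = x³ − 27y², and let S be the ℤ₃-subalgebra of ℤ₃[x, y] generated by 3x, 27y, 3Δ, 3Δ², 3xΔ, 3xΔ², 27yΔ, 27yΔ², Δ³. For integers k ≥ 0, j ∈ {0, 1}, i ∈ {0, 1, 2} and n = 24k + 12j + 8i, let V_n be the degree-n homogeneous component of ℤ₃[x, y] and S_n = S ∩ V_n. Then the quotient group V_n / S_n is isomorphic to ℤ/3 ⊕ (⊕_{m=1}^{k} ℤ/3^{6m}) if i = j = 0 and k ≢ 0 (mod 3), and is isomorphic to ⊕_{m=0}^{k} ℤ/3^{6m + 3j + i} if k ≡ 0 (mod 3) or i + j > 0. -/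

import Mathlib

open MvPolynomial

/-- The polynomial ring `ℤ₃[x, y]` over the 3-adic integers. -/
abbrev PolyZ3 : Type := MvPolynomial (Fin 2) ℤ_[3]

/-- The variable `x` (corresponding to `c₄/3`, of degree 8). -/
noncomputable def xP : PolyZ3 := X 0

/-- The variable `y` (corresponding to `c₆/27`, of degree 12). -/
noncomputable def yP : PolyZ3 := X 1

/-- The discriminant `Δ = x³ − 27y²`. -/
noncomputable def deltaP : PolyZ3 := xP ^ 3 - 27 * yP ^ 2

/-- The `ℤ₃`-subalgebra of `ℤ₃[x, y]` generated by the nine elements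
`3x, 27y, 3Δ, 3Δ², 3xΔ, 3xΔ², 27yΔ, 27yΔ², Δ³`. -/
noncomputable def S3 : Subalgebra ℤ_[3] PolyZ3 :=
  Algebra.adjoin ℤ_[3]
    {3 * xP, 27 * yP, 3 * deltaP, 3 * deltaP ^ 2, 3 * xP * deltaP, 3 * xP * deltaP ^ 2,
      27 * yP * deltaP, 27 * yP * deltaP ^ 2, deltaP ^ 3}

/-- The degree-`n` homogeneous component of `ℤ₃[x, y]`, where `x` has degree 8 and
`y` has degree 12. -/
noncomputable def V (n : ℕ) : Submodule ℤ_[3] PolyZ3 :=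
  weightedHomogeneousSubmodule ℤ_[3] ![8, 12] n

/-- `S ∩ Vₙ`, viewed as a submodule of the degree-`n` homogeneous component `Vₙ`. -/
noncomputable def Sn (n : ℕ) : Submodule ℤ_[3] (V n) :=
  Submodule.comap (V n).subtype (Subalgebra.toSubmodule S3)

/-!
`Vₙ` has the `ℤ₃`-basis `qₘ = xⁱ yʲ⁺²ᵐ Δᵏ⁻ᵐ` (`0 ≤ m ≤ k`), obtained from the monomial basis
`xⁱ⁺³⁽ᵏ⁻ᵐ⁾ yʲ⁺²ᵐ` by the substitution `x³ = Δ + 27y²`. The same substitution writes the degree-`n`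
part of any product of generators of `S` as a combination of the elements `3^{eₘ} qₘ`, where
`eₘ = 6m + 3j + i`, except that `e₀ = 1` when `i = j = 0` and `3 ∤ k`; conversely every `3^{eₘ} qₘ`
is a product of generators. So `Sₙ` is the diagonal sublattice spanned by the `3^{eₘ} qₘ`, and
`Vₙ ⧸ Sₙ ≅ ⊕ₘ ℤ/3^{eₘ}`.
-/

open Finset

local notation "wt" => (![8, 12] : Fin 2 → ℕ)

noncomputable def Module.Basis.quotientSpanSMulEquiv {ι R M : Type*} [Fintype ι] [DecidableEq ι]
    [CommRing R] [AddCommGroup M] [Module R M] (b : Module.Basis ι R M) (d : ι → R) :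
    (M ⧸ Submodule.span R (Set.range fun s => d s • b s)) ≃ₗ[R] ∀ s, R ⧸ Ideal.span {d s} :=
  have hmap : (Submodule.span R (Set.range fun s => d s • b s)).map b.equivFun.toLinearMap =
      Submodule.pi Set.univ fun s => Ideal.span {d s} := by
    rw [Submodule.map_span, ← Set.range_comp, ← Submodule.iSup_map_single,
      Submodule.span_range_eq_iSup]
    congr! 2 with s
    rw [Ideal.span, Submodule.map_span, Set.image_singleton]
    congr 2
    ext t
    simp [Pi.single_apply, Finsupp.single_apply, eq_comm]
  (Submodule.Quotient.equiv _ _ b.equivFun hmap).trans (Submodule.quotientPi _)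

noncomputable def PadicInt.quotientSpanPowEquivZMod (p : ℕ) [Fact p.Prime] (E : ℕ) :
    (ℤ_[p] ⧸ Ideal.span {(p : ℤ_[p]) ^ E}) ≃+* ZMod (p ^ E) :=
  (Ideal.quotEquivOfEq (PadicInt.ker_toZModPow E).symm).trans
    (RingHom.quotientKerEquivOfSurjective (ZMod.ringHom_surjective _))

lemma isWeightedHomogeneous_xP : IsWeightedHomogeneous wt xP 8 := by
  simpa [xP] using isWeightedHomogeneous_X ℤ_[3] wt 0

lemma isWeightedHomogeneous_yP : IsWeightedHomogeneous wt yP 12 := by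
  simpa [yP] using isWeightedHomogeneous_X ℤ_[3] wt 1

lemma isWeightedHomogeneous_deltaP : IsWeightedHomogeneous wt deltaP 24 := by
  have h27 : IsWeightedHomogeneous wt (27 * yP ^ 2) 24 := by
    simpa [← map_ofNat C] using (isWeightedHomogeneous_C wt (27 : ℤ_[3])).mul
      (isWeightedHomogeneous_yP.pow 2)
  rw [deltaP, ← mem_weightedHomogeneousSubmodule]
  exact Submodule.sub_mem _ (isWeightedHomogeneous_xP.pow 3) h27

lemma isWeightedHomogeneous_xP_pow_mul (a b c : ℕ) :
    IsWeightedHomogeneous wt (xP ^ a * yP ^ b * deltaP ^ c) (8 * a + 12 * b + 24 * c) := by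
  have h := ((isWeightedHomogeneous_xP.pow a).mul (isWeightedHomogeneous_yP.pow b)).mul
    (isWeightedHomogeneous_deltaP.pow c)
  simp only [smul_eq_mul] at h
  rwa [show a * 8 + b * 12 + c * 24 = 8 * a + 12 * b + 24 * c by ring] at h

lemma weight_wt_apply (d : Fin 2 →₀ ℕ) : Finsupp.weight wt d = d 0 * 8 + d 1 * 12 := by
  simp [Finsupp.weight_apply, Finsupp.sum_fintype, Fin.sum_univ_two]

section DeltaBasis

variable (k i j : ℕ)

noncomputable def deltaMonomial (s : ℕ) : PolyZ3 := xP ^ i * yP ^ (j + 2 * s) * deltaP ^ (k - s)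

noncomputable def xyExponent (s : ℕ) : Fin 2 →₀ ℕ :=
  Finsupp.single 0 (i + 3 * (k - s)) + Finsupp.single 1 (j + 2 * s)

lemma deltaMonomial_mem_V {s : ℕ} (hs : s ≤ k) :
    deltaMonomial k i j s ∈ V (24 * k + 12 * j + 8 * i) := by
  have h := isWeightedHomogeneous_xP_pow_mul i (j + 2 * s) (k - s)
  rwa [show 8 * i + 12 * (j + 2 * s) + 24 * (k - s) = 24 * k + 12 * j + 8 * i by omega] at h

lemma xP_cube_pow_expansion {s t c : ℕ} (h : s + t + c = k) :
    xP ^ i * yP ^ (j + 2 * s) * deltaP ^ c * (xP ^ 3) ^ t =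
      ∑ r ∈ range (t + 1), ((27 : ℤ_[3]) ^ r * t.choose r) • deltaMonomial k i j (s + r) := by
  rw [show xP ^ 3 = 27 * yP ^ 2 + deltaP by rw [deltaP]; ring, add_pow, mul_sum]
  refine sum_congr rfl fun r hr => ?_
  rw [mem_range] at hr
  rw [deltaMonomial, show k - (s + r) = c + (t - r) by omega, Algebra.smul_def]
  simp only [map_mul, map_pow, map_natCast, MvPolynomial.algebraMap_eq, map_ofNat]
  ring

lemma monomial_xyExponent_mem_span {s : ℕ} (hs : s ≤ k) (c : ℤ_[3]) :
    monomial (xyExponent k i j s) c ∈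
      Submodule.span ℤ_[3] (Set.range fun u : Fin (k + 1) => deltaMonomial k i j u) := by
  have h : monomial (xyExponent k i j s) c =
      c • (xP ^ i * yP ^ (j + 2 * s) * deltaP ^ 0 * (xP ^ 3) ^ (k - s)) := by
    rw [pow_zero, mul_one, ← pow_mul, mul_right_comm, ← pow_add, xP, yP, X_pow_eq_monomial,
      X_pow_eq_monomial, monomial_mul, smul_monomial, xyExponent, one_mul, smul_eq_mul, mul_one]
  rw [h, xP_cube_pow_expansion k i j (by omega : s + (k - s) + 0 = k), smul_sum]
  refine Submodule.sum_mem _ fun r hr => Submodule.smul_mem _ _ (Submodule.smul_mem _ _ ?_)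
  exact Submodule.subset_span ⟨⟨s + r, by rw [mem_range] at hr; omega⟩, rfl⟩

lemma linearIndependent_monomial_xyExponent :
    LinearIndependent ℤ_[3] fun s : Fin (k + 1) => monomial (xyExponent k i j s) (1 : ℤ_[3]) := by
  have hinj : Function.Injective fun s : Fin (k + 1) => xyExponent k i j s := by
    intro s u h
    have h1 := congrArg (· 1) h
    simp only [xyExponent, Finsupp.add_apply, Finsupp.single_apply] at h1
    ext; simpa using h1
  exact (basisMonomials (Fin 2) ℤ_[3]).linearIndependent.comp _ hinj

variable {j i}

lemma span_monomial_xyExponent (hj : j ≤ 1) (hi : i ≤ 2) :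
    Submodule.span ℤ_[3] (Set.range fun s : Fin (k + 1) => monomial (xyExponent k i j s) 1) =
      V (24 * k + 12 * j + 8 * i) := by
  apply le_antisymm
  · rw [Submodule.span_le]
    rintro - ⟨s, rfl⟩
    refine isWeightedHomogeneous_monomial _ _ _ ?_
    simp [weight_wt_apply, xyExponent]
    omega
  · intro p hp
    rw [p.as_sum]
    refine Submodule.sum_mem _ fun d hd => ?_
    have hw : d 0 * 8 + d 1 * 12 = 24 * k + 12 * j + 8 * i := by
      simpa [weight_wt_apply] using hp (mem_support_iff.mp hd)
    obtain ⟨s, hs, rfl⟩ : ∃ s : Fin (k + 1), xyExponent k i j s = d := by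
      refine ⟨⟨(d 1 - j) / 2, by omega⟩, ?_⟩
      ext a
      fin_cases a <;> simp [xyExponent] <;> omega
    rw [← mul_one (coeff _ p), ← smul_eq_mul, ← smul_monomial]
    exact Submodule.smul_mem _ _ (Submodule.subset_span ⟨s, rfl⟩)

lemma span_deltaMonomial (hj : j ≤ 1) (hi : i ≤ 2) :
    Submodule.span ℤ_[3] (Set.range fun s : Fin (k + 1) => deltaMonomial k i j s) =
      V (24 * k + 12 * j + 8 * i) := by
  refine le_antisymm ?_ ?_
  · rw [Submodule.span_le]
    rintro - ⟨s, rfl⟩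
    exact deltaMonomial_mem_V k i j (by omega)
  · rw [← span_monomial_xyExponent k hj hi, Submodule.span_le]
    rintro - ⟨s, rfl⟩
    exact monomial_xyExponent_mem_span k i j (by omega) 1

/-- A spanning family of `Vₙ ≅ ℤ₃ᵏ⁺¹` with `k + 1` members is a basis, since commutative rings have
the Orzech property. -/
lemma linearIndependent_deltaMonomial (hj : j ≤ 1) (hi : i ≤ 2) :
    LinearIndependent ℤ_[3] fun s : Fin (k + 1) => deltaMonomial k i j s := by
  rw [linearIndependent_iff_card_eq_finrank_span, Set.finrank, span_deltaMonomial k hj hi,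
    ← span_monomial_xyExponent k hj hi,
    finrank_span_eq_card (linearIndependent_monomial_xyExponent k i j)]

noncomputable def deltaBasis (hj : j ≤ 1) (hi : i ≤ 2) :
    Module.Basis (Fin (k + 1)) ℤ_[3] (V (24 * k + 12 * j + 8 * i)) :=
  (Module.Basis.span (linearIndependent_deltaMonomial k hj hi)).map
    (LinearEquiv.ofEq _ _ (span_deltaMonomial k hj hi))

lemma coe_deltaBasis (hj : j ≤ 1) (hi : i ≤ 2) (s : Fin (k + 1)) :
    (deltaBasis k hj hi s : PolyZ3) = deltaMonomial k i j s := by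
  simp [deltaBasis, Module.Basis.span_apply]

end DeltaBasis

lemma three_pow_smul (E : ℕ) (p : PolyZ3) : (3 : ℤ_[3]) ^ E • p = 3 ^ E * p := by
  rw [Algebra.smul_def, map_pow, map_ofNat]

lemma three_mul_xP_mem_S3 : 3 * xP ∈ S3 := Algebra.subset_adjoin (by simp)
lemma twentySeven_mul_yP_mem_S3 : 27 * yP ∈ S3 := Algebra.subset_adjoin (by simp)
lemma deltaP_pow_three_mem_S3 : deltaP ^ 3 ∈ S3 := Algebra.subset_adjoin (by simp)

lemma mul_deltaP_pow_mem_S3 {g : PolyZ3} (h : ∀ r < 3, g * deltaP ^ r ∈ S3) (r : ℕ) :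
    g * deltaP ^ r ∈ S3 := by
  rw [← Nat.mod_add_div r 3, pow_add, ← mul_assoc, pow_mul]
  exact mul_mem (h _ (Nat.mod_lt r (by norm_num))) (pow_mem deltaP_pow_three_mem_S3 _)

lemma three_mul_deltaP_pow_mem_S3 : ∀ r, 3 * deltaP ^ r ∈ S3 :=
  mul_deltaP_pow_mem_S3 fun r hr => by
    interval_cases r
    · simp
    all_goals exact Algebra.subset_adjoin (by simp)

lemma three_mul_xP_mul_deltaP_pow_mem_S3 : ∀ r, 3 * xP * deltaP ^ r ∈ S3 :=
  mul_deltaP_pow_mem_S3 fun r hr => by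
    interval_cases r
    · simpa using three_mul_xP_mem_S3
    all_goals exact Algebra.subset_adjoin (by simp)

lemma twentySeven_mul_yP_mul_deltaP_pow_mem_S3 : ∀ r, 27 * yP * deltaP ^ r ∈ S3 :=
  mul_deltaP_pow_mem_S3 fun r hr => by
    interval_cases r
    · simpa using twentySeven_mul_yP_mem_S3
    all_goals exact Algebra.subset_adjoin (by simp)

/-- Every product of generators of `S` has this shape: `3x` and `27y` contribute to `3ᵃ⁺³ᵇ`, the other
generators with a factor `3` contribute to `3^γ`, and only `Δ³` contributes no `3`. -/
def IsS3Monomial (p : PolyZ3) : Prop :=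
  ∃ a b c γ : ℕ, p = (3 : ℤ_[3]) ^ (a + 3 * b + γ) • (xP ^ a * yP ^ b * deltaP ^ c) ∧
    (a + b + γ = 0 → 3 ∣ c)

lemma isS3Monomial_of_mem_closure {p : PolyZ3}
    (hp : p ∈ Submonoid.closure {3 * xP, 27 * yP, 3 * deltaP, 3 * deltaP ^ 2, 3 * xP * deltaP,
      3 * xP * deltaP ^ 2, 27 * yP * deltaP, 27 * yP * deltaP ^ 2, deltaP ^ 3}) :
    IsS3Monomial p := by
  induction hp using Submonoid.closure_induction with
  | one => exact ⟨0, 0, 0, 0, by simp, fun _ => dvd_zero 3⟩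
  | mul p q _ _ hp hq =>
    obtain ⟨a, b, c, γ, rfl, h⟩ := hp
    obtain ⟨a', b', c', γ', rfl, h'⟩ := hq
    refine ⟨a + a', b + b', c + c', γ + γ', ?_, fun h0 => ?_⟩
    · rw [smul_mul_smul_comm, ← pow_add]
      congr 1 <;> ring
    · exact dvd_add (h (by omega)) (h' (by omega))
  | mem p hp =>
    simp only [Set.mem_insert_iff, Set.mem_singleton_iff] at hp
    rcases hp with rfl | rfl | rfl | rfl | rfl | rfl | rfl | rfl | rfl
    · exact ⟨1, 0, 0, 0, by rw [three_pow_smul]; ring, by omega⟩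
    · exact ⟨0, 1, 0, 0, by rw [three_pow_smul]; ring, by omega⟩
    · exact ⟨0, 0, 1, 1, by rw [three_pow_smul]; ring, by omega⟩
    · exact ⟨0, 0, 2, 1, by rw [three_pow_smul]; ring, by omega⟩
    · exact ⟨1, 0, 1, 0, by rw [three_pow_smul]; ring, by omega⟩
    · exact ⟨1, 0, 2, 0, by rw [three_pow_smul]; ring, by omega⟩
    · exact ⟨0, 1, 1, 0, by rw [three_pow_smul]; ring, by omega⟩
    · exact ⟨0, 1, 2, 0, by rw [three_pow_smul]; ring, by omega⟩
    · exact ⟨0, 0, 3, 0, by rw [three_pow_smul]; ring, fun _ => dvd_refl 3⟩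

section Lattice

variable (k i j : ℕ)

/-- The power of `3` in front of `deltaMonomial k i j m` in a basis of `Sₙ`: the generic value
`6m + 3j + i` comes from `(3x)ⁱ (27y)ʲ⁺²ᵐ`, and the exception is `Δᵏ`, of which only `3Δᵏ` lies in
`S` unless `3 ∣ k`. -/
def sExp (m : ℕ) : ℕ := if m + i + j = 0 ∧ k % 3 ≠ 0 then 1 else 6 * m + 3 * j + i

noncomputable def sLattice : Submodule ℤ_[3] PolyZ3 :=
  Submodule.span ℤ_[3]
    (Set.range fun m : Fin (k + 1) => (3 : ℤ_[3]) ^ sExp k i j m • deltaMonomial k i j m)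

lemma three_pow_sExp_smul_deltaMonomial_mem_S3 (m : ℕ) :
    (3 : ℤ_[3]) ^ sExp k i j m • deltaMonomial k i j m ∈ S3 := by
  rw [three_pow_smul, deltaMonomial, sExp]
  cases i with
  | succ i =>
    rw [if_neg (by omega), show (3 : PolyZ3) ^ (6 * m + 3 * j + (i + 1)) *
        (xP ^ (i + 1) * yP ^ (j + 2 * m) * deltaP ^ (k - m)) =
        (3 * xP) ^ i * (27 * yP) ^ (j + 2 * m) * (3 * xP * deltaP ^ (k - m)) by
      rw [show 6 * m + 3 * j + (i + 1) = 3 * (j + 2 * m) + i + 1 by omega, pow_add, pow_add,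
        pow_mul]
      ring]
    exact mul_mem (mul_mem (pow_mem three_mul_xP_mem_S3 _) (pow_mem twentySeven_mul_yP_mem_S3 _))
      (three_mul_xP_mul_deltaP_pow_mem_S3 _)
  | zero =>
    rcases Nat.eq_zero_or_pos (j + 2 * m) with hjm | hjm
    · obtain ⟨rfl, rfl⟩ : j = 0 ∧ m = 0 := by omega
      split_ifs with hk
      · simpa using three_mul_deltaP_pow_mem_S3 k
      · rw [show k = 3 * (k / 3) by omega]
        simpa [pow_mul] using pow_mem deltaP_pow_three_mem_S3 (k / 3)
    · obtain ⟨b, hb⟩ := Nat.exists_eq_add_of_lt hjm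
      rw [if_neg (by omega), hb, show (3 : PolyZ3) ^ (6 * m + 3 * j + 0) *
          (xP ^ 0 * yP ^ (0 + b + 1) * deltaP ^ (k - m)) =
          (27 * yP) ^ b * (27 * yP * deltaP ^ (k - m)) by
        rw [show 6 * m + 3 * j + 0 = 3 * b + 3 by omega, pow_add, pow_mul]; ring]
      exact mul_mem (pow_mem twentySeven_mul_yP_mem_S3 _)
        (twentySeven_mul_yP_mul_deltaP_pow_mem_S3 _)

variable {j i}

lemma weightedHomogeneousComponent_mem_sLattice (hj : j ≤ 1) (hi : i ≤ 2) {p : PolyZ3}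
    (hp : IsS3Monomial p) :
    weightedHomogeneousComponent wt (24 * k + 12 * j + 8 * i) p ∈ sLattice k i j := by
  obtain ⟨a, b, c, γ, rfl, hc⟩ := hp
  have hhom := isWeightedHomogeneous_xP_pow_mul a b c
  rw [map_smul]
  by_cases hdeg : 8 * a + 12 * b + 24 * c = 24 * k + 12 * j + 8 * i
  swap
  · rw [hhom.weightedHomogeneousComponent_ne _ (Ne.symm hdeg), smul_zero]
    exact zero_mem _
  rw [hdeg] at hhom
  obtain ⟨s, t, rfl, rfl, hk⟩ : ∃ s t, a = i + 3 * t ∧ b = j + 2 * s ∧ s + t + c = k :=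
    ⟨(b - j) / 2, (a - i) / 3, by omega, by omega, by omega⟩
  rw [hhom.weightedHomogeneousComponent_same, show xP ^ (i + 3 * t) * yP ^ (j + 2 * s) *
      deltaP ^ c = xP ^ i * yP ^ (j + 2 * s) * deltaP ^ c * (xP ^ 3) ^ t by ring,
    xP_cube_pow_expansion k i j hk, smul_sum]
  refine Submodule.sum_mem _ fun r hr => ?_
  rw [mem_range] at hr
  have hexp : sExp k i j (s + r) ≤ i + 3 * t + 3 * (j + 2 * s) + γ + 3 * r := by
    unfold sExp
    split_ifs <;> omega
  obtain ⟨δ, hδ⟩ := Nat.exists_eq_add_of_le hexp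
  rw [smul_smul, show (3 : ℤ_[3]) ^ (i + 3 * t + 3 * (j + 2 * s) + γ) * (27 ^ r * t.choose r) =
      (t.choose r * 3 ^ δ) * 3 ^ sExp k i j (s + r) by
    have h3 : (3 : ℤ_[3]) ^ (i + 3 * t + 3 * (j + 2 * s) + γ) * 3 ^ (3 * r) =
        3 ^ sExp k i j (s + r) * 3 ^ δ := by rw [← pow_add, ← pow_add, hδ]
    rw [show (27 : ℤ_[3]) = 3 ^ 3 by norm_num, ← pow_mul]
    linear_combination (t.choose r : ℤ_[3]) * h3, ← smul_smul]
  exact Submodule.smul_mem _ _ (Submodule.subset_span ⟨⟨s + r, by omega⟩, rfl⟩)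

lemma weightedHomogeneousComponent_mem_sLattice_of_mem_S3 (hj : j ≤ 1) (hi : i ≤ 2) {p : PolyZ3}
    (hp : p ∈ S3) :
    weightedHomogeneousComponent wt (24 * k + 12 * j + 8 * i) p ∈ sLattice k i j := by
  rw [← Subalgebra.mem_toSubmodule, S3, Algebra.adjoin_eq_span] at hp
  induction hp using Submodule.span_induction with
  | mem g hg =>
    exact weightedHomogeneousComponent_mem_sLattice k hj hi (isS3Monomial_of_mem_closure hg)
  | zero => simp
  | add p q _ _ hp hq => simpa using add_mem hp hq
  | smul a p _ hp => simpa using Submodule.smul_mem _ a hp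

lemma sLattice_le_S3 : sLattice k i j ≤ Subalgebra.toSubmodule S3 := by
  rw [sLattice, Submodule.span_le]
  rintro - ⟨m, rfl⟩
  exact three_pow_sExp_smul_deltaMonomial_mem_S3 k i j m

lemma Sn_eq_span (hj : j ≤ 1) (hi : i ≤ 2) :
    Sn (24 * k + 12 * j + 8 * i) = Submodule.span ℤ_[3]
      (Set.range fun m : Fin (k + 1) => (3 : ℤ_[3]) ^ sExp k i j m • deltaBasis k hj hi m) := by
  have hmap : (Submodule.span ℤ_[3] (Set.range fun m : Fin (k + 1) =>
      (3 : ℤ_[3]) ^ sExp k i j m • deltaBasis k hj hi m)).map (V _).subtype = sLattice k i j := by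
    simp only [Submodule.map_span, ← Set.range_comp, sLattice, Function.comp_def,
      Submodule.subtype_apply, Submodule.coe_smul, coe_deltaBasis]
  rw [← Submodule.comap_map_eq_of_injective (V _).injective_subtype (Submodule.span _ _), hmap, Sn]
  ext v
  refine ⟨fun hv => ?_, fun hv => sLattice_le_S3 k hv⟩
  simpa [(v.2 : IsWeightedHomogeneous wt _ _).weightedHomogeneousComponent_same] using
    weightedHomogeneousComponent_mem_sLattice_of_mem_S3 k hj hi hv

noncomputable def quotientSnEquiv (hj : j ≤ 1) (hi : i ≤ 2) :
    (V (24 * k + 12 * j + 8 * i) ⧸ Sn (24 * k + 12 * j + 8 * i)) ≃+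
      ∀ m : Fin (k + 1), ZMod (3 ^ sExp k i j m) :=
  ((Submodule.quotEquivOfEq _ _ (Sn_eq_span k hj hi)).trans
    ((deltaBasis k hj hi).quotientSpanSMulEquiv _)).toAddEquiv.trans
      (AddEquiv.piCongrRight fun _ => (PadicInt.quotientSpanPowEquivZMod 3 _).toAddEquiv)

end Lattice

/-- for `n = 24k + 12j + 8i` with `j ∈ {0, 1}` and `i ∈ {0, 1, 2}`, the
quotient `Vₙ / Sₙ` is `ℤ/3 ⊕ ⊕_{m=1}^{k} ℤ/3^{6m}` when `i = j = 0` and `k ≢ 0 (mod 3)`,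
and is `⊕_{m=0}^{k} ℤ/3^{6m + 3j + i}` when `k ≡ 0 (mod 3)` or `i + j > 0`. -/
theorem quotient_by_S3_structure (k j i n : ℕ) (hj : j ≤ 1) (hi : i ≤ 2)
    (hn : n = 24 * k + 12 * j + 8 * i) :
    (i = 0 → j = 0 → k % 3 ≠ 0 →
      Nonempty ((V n ⧸ Sn n) ≃+
        (ZMod 3 × ∀ m : Fin k, ZMod (3 ^ (6 * ((m : ℕ) + 1)))))) ∧
    (k % 3 = 0 ∨ 0 < i + j →
      Nonempty ((V n ⧸ Sn n) ≃+
        (∀ m : Fin (k + 1), ZMod (3 ^ (6 * (m : ℕ) + 3 * j + i))))) := by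
  subst hn
  refine ⟨fun hi0 hj0 hk => ?_, fun h => ?_⟩
  · subst hi0 hj0
    let splitHead : (∀ m : Fin (k + 1), ZMod (3 ^ sExp k 0 0 m)) ≃+
        ZMod (3 ^ sExp k 0 0 0) × ∀ m : Fin k, ZMod (3 ^ sExp k 0 0 m.succ) :=
      { (Fin.consEquiv _).symm with map_add' := fun _ _ => rfl }
    exact ⟨(quotientSnEquiv k hj hi).trans <| splitHead.trans <| AddEquiv.prodCongr
      (ZMod.ringEquivCongr (by simp [sExp, hk])).toAddEquiv
      (AddEquiv.piCongrRight fun m => (ZMod.ringEquivCongr (by simp [sExp])).toAddEquiv)⟩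
  · exact ⟨(quotientSnEquiv k hj hi).trans <| AddEquiv.piCongrRight fun m =>
      (ZMod.ringEquivCongr (by rw [sExp, if_neg (by omega)])).toAddEquiv⟩
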